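/- arXiv:1608.03040 — 7 statements merged into one kernel-verified Lean document; each statement's English description precedes it below -/
import Mathlib

section
/- Every finite digraph has a vertex 4-colouring such that for every vertex v, at most half of the out-neighbours of v receive the same colour as v. -/
namespace MajorityFourAux

open Finset

variable {V : Type*} [Fintype V] [DecidableEq V]

def pair4 : Bool → Bool → Fin 4
  | false, false => 0
  | false, true => 1
  | true, false => 2
  | true, true => 3

lemma pair4_inj {a b a' b' : Bool} (h : pair4 a b = pair4 a' b') : a = a' ∧ b = b' := by
  cases a <;> cases b <;> cases a' <;> cases b' <;> simp_all [pair4]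

variable (A : V → V → Prop) [DecidableRel A]

/-- Greedy colouring processed in decreasing rank order. After `G r k`,
vertices of rank `≥ card V - k` have received their final colour. -/
def G (r : V → ℕ) : ℕ → V → Bool
  | 0 => fun _ => false
  | (k+1) => fun v =>
      if r v = Fintype.card V - (k+1) then
        decide (2 * ((Finset.univ.filter
            (fun w => r v < r w ∧ A v w ∧ G r k w = true)).card)
          ≤ (Finset.univ.filter (fun w => r v < r w ∧ A v w)).card)
      else G r k v

lemma G_agree (r : V → ℕ) {k m : ℕ} (hkm : k ≤ m) (hm : m ≤ Fintype.card V)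
    (v : V) (hv : Fintype.card V - k ≤ r v) : G A r m v = G A r k v := by
  induction m, hkm using Nat.le_induction with
  | base => rfl
  | succ m hkm ih =>
      have h1 : r v ≠ Fintype.card V - (m+1) := by omega
      show (if r v = Fintype.card V - (m+1) then _ else G A r m v) = G A r k v
      rw [if_neg h1]
      exact ih (by omega)

lemma G_spec (r : V → ℕ) (v : V) (hv : r v < Fintype.card V)
    (hr : ∀ w : V, r w < Fintype.card V) :
    2 * ((Finset.univ.filter
        (fun w => r v < r w ∧ A v w ∧ G A r (Fintype.card V) w = G A r (Fintype.card V) v)).card)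
      ≤ (Finset.univ.filter (fun w => r v < r w ∧ A v w)).card := by
  set n := Fintype.card V with hn
  set j := r v with hj
  set k := n - 1 - j with hk
  have hk1 : k + 1 ≤ n := by omega
  have hnk1 : n - (k+1) = j := by omega
  have hnk : n - k = j + 1 := by omega
  -- final colour of v equals colour assigned at step k+1
  have hv2 : G A r n v = G A r (k+1) v := G_agree A r hk1 le_rfl v (by omega)
  -- final colours of later vertices are already fixed at stage k
  have hw : ∀ w : V, j < r w → G A r n w = G A r k w := fun w hjw =>
    G_agree A r (by omega) le_rfl w (by omega)
  set S := Finset.univ.filter (fun w => r v < r w ∧ A v w) with hS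
  set T := S.filter (fun w => G A r k w = true) with hT
  have hTS : T.card ≤ S.card := card_filter_le _ _
  have hstep : G A r (k+1) v = decide (2 * T.card ≤ S.card) := by
    show (if r v = n - (k+1) then _ else _) = _
    rw [if_pos (by omega)]
    congr 1
    have : Finset.univ.filter (fun w => r v < r w ∧ A v w ∧ G A r k w = true) = T := by
      rw [hT, hS, filter_filter]
      apply filter_congr
      intro w _
      tauto
    rw [this]
  have hgoal : Finset.univ.filter
      (fun w => r v < r w ∧ A v w ∧ G A r n w = G A r n v)
      = S.filter (fun w => G A r k w = G A r (k+1) v) := by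
    rw [hS, filter_filter]
    apply filter_congr
    intro w _
    constructor
    · rintro ⟨h1, h2, h3⟩
      exact ⟨⟨h1, h2⟩, by rw [← hw w h1, h3, hv2]⟩
    · rintro ⟨⟨h1, h2⟩, h3⟩
      exact ⟨h1, h2, by rw [hw w h1, h3, hv2]⟩
  rw [hgoal]
  by_cases hb : 2 * T.card ≤ S.card
  · have : G A r (k+1) v = true := by rw [hstep]; exact decide_eq_true hb
    rw [this]
    have : S.filter (fun w => G A r k w = true) = T := rfl
    rw [this]
    exact hb
  · have hfalse : G A r (k+1) v = false := by rw [hstep]; exact decide_eq_false hb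
    rw [hfalse]
    have hsplit : S.filter (fun w => G A r k w = false)
        = S \ T := by
      rw [hT]
      ext w
      simp only [mem_filter, mem_sdiff]
      constructor
      · rintro ⟨h1, h2⟩; exact ⟨h1, by simp [mem_filter, h1, h2]⟩
      · rintro ⟨h1, h2⟩
        refine ⟨h1, ?_⟩
        simp only [mem_filter, h1, true_and] at h2
        simpa using h2
    rw [hsplit, card_sdiff_of_subset (filter_subset _ _), ← hT]
    omega

end MajorityFourAux

/-- Every finite digraph has a vertex 4-colouring such that for every vertex v,
at most half of the out-neighbours of v receive the same colour as v. -/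
theorem majority_four_colouring
    {V : Type*} [Fintype V] [DecidableEq V]
    (A : V → V → Prop) [DecidableRel A] (hirr : Irreflexive A) :
    ∃ f : V → Fin 4, ∀ v : V,
      2 * ((Finset.univ.filter (fun w => A v w ∧ f w = f v)).card)
        ≤ (Finset.univ.filter (fun w => A v w)).card := by
  classical
  open Finset MajorityFourAux in
  set n := Fintype.card V with hn
  set e := Fintype.equivFin V with he
  set r1 : V → ℕ := fun v => (e v : ℕ) with hr1
  set r2 : V → ℕ := fun v => n - 1 - (e v : ℕ) with hr2
  set g : V → Bool := MajorityFourAux.G A r1 n with hg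
  set h : V → Bool := MajorityFourAux.G A r2 n with hh
  refine ⟨fun v => MajorityFourAux.pair4 (g v) (h v), ?_⟩
  intro v
  have hnpos : 0 < n := by rw [hn]; exact Fintype.card_pos_iff.mpr ⟨v⟩
  have hr1lt : ∀ w : V, r1 w < n := fun w => (e w).isLt
  have hr2lt : ∀ w : V, r2 w < n := fun w => by
    have := (e w).isLt; simp only [hr2]; omega
  have hG1 := MajorityFourAux.G_spec A r1 v (hr1lt v) hr1lt
  have hG2 := MajorityFourAux.G_spec A r2 v (hr2lt v) hr2lt
  -- rewrite the r2 order condition as e w < e v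
  have hr2iff : ∀ w : V, (r2 v < r2 w) ↔ ((e w : ℕ) < (e v : ℕ)) := by
    intro w
    have h1 := (e v).isLt
    have h2 := (e w).isLt
    simp only [hr2]
    omega
  set Ff := Finset.univ.filter (fun w => (e v : ℕ) < (e w : ℕ) ∧ A v w) with hFf
  set Fb := Finset.univ.filter (fun w => (e w : ℕ) < (e v : ℕ) ∧ A v w) with hFb
  set Mf := Finset.univ.filter
      (fun w => (e v : ℕ) < (e w : ℕ) ∧ A v w ∧ g w = g v) with hMf
  set Mb := Finset.univ.filter
      (fun w => (e w : ℕ) < (e v : ℕ) ∧ A v w ∧ h w = h v) with hMb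
  have hG1' : 2 * Mf.card ≤ Ff.card := hG1
  have hG2' : 2 * Mb.card ≤ Fb.card := by
    have e1 : Finset.univ.filter (fun w => r2 v < r2 w ∧ A v w ∧ h w = h v) = Mb := by
      apply filter_congr; intro w _; rw [hr2iff w]
    have e2 : Finset.univ.filter (fun w => r2 v < r2 w ∧ A v w) = Fb := by
      apply filter_congr; intro w _; rw [hr2iff w]
    rw [e1, e2] at hG2
    exact hG2
  -- splitting of the full out-neighbourhood and the monochromatic part
  have hne : ∀ w : V, A v w → (e w : ℕ) ≠ (e v : ℕ) := by
    intro w hA hEq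
    have : w = v := e.injective (Fin.ext hEq)
    exact hirr v (this ▸ hA)
  have hsplitF : (Finset.univ.filter (fun w => A v w)).card = Ff.card + Fb.card := by
    rw [hFf, hFb, ← card_union_of_disjoint]
    · congr 1
      ext w
      simp only [mem_union, mem_filter, Finset.mem_univ, true_and]
      constructor
      · intro hA
        rcases lt_trichotomy ((e v : ℕ)) ((e w : ℕ)) with h1 | h1 | h1
        · exact Or.inl ⟨h1, hA⟩
        · exact absurd h1.symm (hne w hA)
        · exact Or.inr ⟨h1, hA⟩
      · rintro (⟨_, hA⟩ | ⟨_, hA⟩) <;> exact hA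
    · rw [Finset.disjoint_left]
      intro w hw1 hw2
      simp only [mem_filter] at hw1 hw2
      omega
  set M := Finset.univ.filter
      (fun w => A v w ∧ pair4 (g w) (h w) = pair4 (g v) (h v)) with hM
  set M1 := Finset.univ.filter
      (fun w => (e v : ℕ) < (e w : ℕ) ∧ A v w ∧ pair4 (g w) (h w) = pair4 (g v) (h v)) with hM1
  set M2 := Finset.univ.filter
      (fun w => (e w : ℕ) < (e v : ℕ) ∧ A v w ∧ pair4 (g w) (h w) = pair4 (g v) (h v)) with hM2
  have hsplitM : M.card = M1.card + M2.card := by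
    rw [hM, hM1, hM2, ← card_union_of_disjoint]
    · congr 1
      ext w
      simp only [mem_union, mem_filter, Finset.mem_univ, true_and]
      constructor
      · rintro ⟨hA, hp⟩
        rcases lt_trichotomy ((e v : ℕ)) ((e w : ℕ)) with h1 | h1 | h1
        · exact Or.inl ⟨h1, hA, hp⟩
        · exact absurd h1.symm (hne w hA)
        · exact Or.inr ⟨h1, hA, hp⟩
      · rintro (⟨_, hA, hp⟩ | ⟨_, hA, hp⟩) <;> exact ⟨hA, hp⟩
    · rw [Finset.disjoint_left]
      intro w hw1 hw2
      simp only [mem_filter] at hw1 hw2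
      omega
  have hM1sub : M1 ⊆ Mf := by
    intro w hw
    simp only [hM1, hMf, mem_filter, Finset.mem_univ, true_and] at hw ⊢
    exact ⟨hw.1, hw.2.1, (pair4_inj hw.2.2).1⟩
  have hM2sub : M2 ⊆ Mb := by
    intro w hw
    simp only [hM2, hMb, mem_filter, Finset.mem_univ, true_and] at hw ⊢
    exact ⟨hw.1, hw.2.1, (pair4_inj hw.2.2).2⟩
  have h1 := Finset.card_le_card hM1sub
  have h2 := Finset.card_le_card hM2sub
  show 2 * M.card ≤ (Finset.univ.filter (fun w => A v w)).card
  rw [hsplitM, hsplitF]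
  omega
end

section
/- Every finite acyclic digraph has a majority 2-colouring: a 2-colouring such that for every vertex v, at most half of the out-neighbours of v receive the same colour as v. -/
section Aux

variable {V : Type*} [Fintype V] [DecidableEq V] (A : V → V → Prop) [DecidableRel A]

/-- Choose the minority colour among out-neighbours. -/
def majBody (v : V) (g : ∀ w, (fun w v => A v w) w v → Fin 2) : Fin 2 :=
  if 2 * ((Finset.univ.filter (fun w => A v w)).attach.filter
      (fun w => g w.1 (Finset.mem_filter.mp w.2).2 = 0)).card
      ≤ (Finset.univ.filter (fun w => A v w)).card then 0 else 1

lemma card_attach_filter (s : Finset V) (p : V → Prop) [DecidablePred p] :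
    (s.attach.filter (fun x => p x.1)).card = (s.filter p).card := by
  rw [Finset.filter_attach, Finset.card_map, Finset.card_attach]

end Aux

/-- Every finite acyclic digraph has a majority 2-colouring. -/
theorem acyclic_majority_two_colouring
    {V : Type*} [Fintype V] [DecidableEq V]
    (A : V → V → Prop) [DecidableRel A]
    (hacyc : ∀ v : V, ¬ Relation.TransGen A v v) :
    ∃ f : V → Fin 2, ∀ v : V,
      2 * ((Finset.univ.filter (fun w => A v w ∧ f w = f v)).card)
        ≤ (Finset.univ.filter (fun w => A v w)).card := by
  have hwf : WellFounded (fun w v => A v w) := by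
    have hirr : IsIrrefl V (Relation.TransGen (fun w v => A v w)) := by
      constructor
      intro v h
      exact hacyc v ((Relation.transGen_swap).mp h)
    have hwf' : WellFounded (Relation.TransGen (fun w v => A v w)) :=
      Finite.wellFounded_of_trans_of_irrefl _
    refine Subrelation.wf ?_ hwf'
    intro a b h
    exact Relation.TransGen.single h
  set f : V → Fin 2 := hwf.fix (majBody A) with hf
  refine ⟨f, fun v => ?_⟩
  have hfix : f v = majBody A v (fun w _ => f w) := hwf.fix_eq _ v
  set N := Finset.univ.filter (fun w => A v w) with hN
  have hcard : ∀ c : Fin 2,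
      (Finset.univ.filter (fun w => A v w ∧ f w = c)).card
        = (N.filter (fun w => f w = c)).card := by
    intro c
    congr 1
    rw [hN, Finset.filter_filter]
  have hsplit : (N.filter (fun w => f w = 0)).card + (N.filter (fun w => f w = 1)).card
      = N.card := by
    have h1 : (N.filter fun w => f w = 1) = N.filter (fun w => ¬ f w = 0) := by
      ext w
      simp only [Finset.mem_filter, Fin.ext_iff]
      refine and_congr_right fun _ => ?_
      omega
    rw [h1, Finset.card_filter_add_card_filter_not]
  have hattach : ((N.attach.filter
      (fun w => f w.1 = 0)).card) = (N.filter (fun w => f w = 0)).card :=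
    card_attach_filter N (fun w => f w = 0)
  rw [majBody] at hfix
  by_cases hc : 2 * ((N.attach.filter (fun w => f w.1 = 0)).card) ≤ N.card
  · have hfv : f v = 0 := by rw [hfix]; simp only [hN] at hc ⊢; rw [if_pos hc]
    rw [hfv, hcard 0]
    omega
  · have hfv : f v = 1 := by rw [hfix]; simp only [hN] at hc ⊢; rw [if_neg hc]
    rw [hfv, hcard 1]
    omega
end

section
/- If a finite digraph admits an edge-partition into two acyclic subdigraphs, and every acyclic digraph has a majority 2-colouring, then the digraph has a majority 4-colouring given by the product of the two 2-colourings. -/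
/-- If a finite digraph has an edge-partition into two parts, and f₁, f₂ are majority
2-colourings with respect to the two parts, then the product colouring
v ↦ (f₁ v, f₂ v) is a majority 4-colouring of the whole digraph. -/
theorem product_colouring_is_majority
    {V : Type*} [Fintype V] [DecidableEq V]
    (A E₁ E₂ : V → V → Prop) [DecidableRel A] [DecidableRel E₁] [DecidableRel E₂]
    (hcover : ∀ u v : V, A u v ↔ (E₁ u v ∨ E₂ u v))
    (hdisj : ∀ u v : V, ¬ (E₁ u v ∧ E₂ u v))
    (hacyc₁ : ∀ v : V, ¬ Relation.TransGen E₁ v v)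
    (hacyc₂ : ∀ v : V, ¬ Relation.TransGen E₂ v v)
    (f₁ f₂ : V → Fin 2)
    (hf₁ : ∀ v : V, 2 * ((Finset.univ.filter (fun w => E₁ v w ∧ f₁ w = f₁ v)).card)
        ≤ (Finset.univ.filter (fun w => E₁ v w)).card)
    (hf₂ : ∀ v : V, 2 * ((Finset.univ.filter (fun w => E₂ v w ∧ f₂ w = f₂ v)).card)
        ≤ (Finset.univ.filter (fun w => E₂ v w)).card) :
    ∀ v : V,
      2 * ((Finset.univ.filter (fun w => A v w ∧ f₁ w = f₁ v ∧ f₂ w = f₂ v)).card)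
        ≤ (Finset.univ.filter (fun w => A v w)).card := by
  intro v
  have hA : (Finset.univ.filter (fun w => A v w)).card
      = (Finset.univ.filter (fun w => E₁ v w)).card
        + (Finset.univ.filter (fun w => E₂ v w)).card := by
    rw [← Finset.card_union_of_disjoint]
    · congr 1
      ext w
      simp [hcover]
    · rw [Finset.disjoint_filter]
      intro w _ h1 h2
      exact hdisj v w ⟨h1, h2⟩
  have hBad : (Finset.univ.filter (fun w => A v w ∧ f₁ w = f₁ v ∧ f₂ w = f₂ v)).card
      ≤ (Finset.univ.filter (fun w => E₁ v w ∧ f₁ w = f₁ v)).card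
        + (Finset.univ.filter (fun w => E₂ v w ∧ f₂ w = f₂ v)).card := by
    rw [← Finset.card_union_of_disjoint]
    · apply Finset.card_le_card
      intro w hw
      simp only [Finset.mem_filter, Finset.mem_union, Finset.mem_univ, true_and] at hw ⊢
      rcases (hcover v w).mp hw.1 with h | h
      · exact Or.inl ⟨h, hw.2.1⟩
      · exact Or.inr ⟨h, hw.2.2⟩
    · rw [Finset.disjoint_filter]
      intro w _ h1 h2
      exact hdisj v w ⟨h1.1, h2.1⟩
  calc 2 * (Finset.univ.filter (fun w => A v w ∧ f₁ w = f₁ v ∧ f₂ w = f₂ v)).card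
      ≤ 2 * ((Finset.univ.filter (fun w => E₁ v w ∧ f₁ w = f₁ v)).card
        + (Finset.univ.filter (fun w => E₂ v w ∧ f₂ w = f₂ v)).card) := by omega
    _ ≤ (Finset.univ.filter (fun w => E₁ v w)).card
        + (Finset.univ.filter (fun w => E₂ v w)).card := by
        have := hf₁ v; have := hf₂ v; omega
    _ = _ := hA.symm
end

section
/- Let k ≥ 1 be odd and let n be a prime with n > k+1. Let G be the digraph on vertex set ZMod n where the out-neighbours of v_i are v_{i+1}, …, v_{i+k}. Then G has no 2-colouring in which every vertex has at most (k-1)/2 out-neighbours of its own colour; in particular G has no majority 2-colouring. -/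
private def gg (n : ℕ) (f : ZMod n → Fin 2) (x : ZMod n) : ℕ := if f x = 0 then 1 else 0

private def zz (n k : ℕ) (f : ZMod n → Fin 2) (i : ZMod n) : ℕ :=
  ∑ t ∈ Finset.range (k+1), gg n f (i + (t : ZMod n))

private lemma gg_le_one (n : ℕ) (f : ZMod n → Fin 2) (x : ZMod n) : gg n f x ≤ 1 := by
  unfold gg; split <;> omega

private lemma zz_split (n k : ℕ) (f : ZMod n → Fin 2) (i : ZMod n) :
    zz n k f i = gg n f i + ∑ j ∈ Finset.Icc 1 k, gg n f (i + (j : ZMod n)) := by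
  rw [zz, Finset.sum_range_succ', ← Finset.Ico_add_one_right_eq_Icc, Finset.sum_Ico_eq_sum_range]
  simp only [Nat.add_sub_cancel, Nat.cast_zero, add_zero]
  rw [add_comm]
  congr 1
  apply Finset.sum_congr rfl
  intro t _
  congr 1
  push_cast
  ring

private lemma aux (n k m : ℕ) [NeZero n] (hnodd : Odd n) (hk : k = 2*m+1)
    (f : ZMod n → Fin 2)
    (hf : ∀ i : ZMod n,
      ((Finset.Icc 1 k).filter (fun j : ℕ => f (i + (j : ZMod n)) = f i)).card ≤ m) :
    False := by
  set g := gg n f with hgdef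
  set z := zz n k f with hzdef
  have fin2 : ∀ v : Fin 2, ¬ v = 0 ↔ v = 1 := by decide
  -- counting same-colour / zeros in the window tail
  have cnt0 : ∀ i : ZMod n, ∑ j ∈ Finset.Icc 1 k, g (i + (j : ZMod n))
      = ((Finset.Icc 1 k).filter (fun j : ℕ => f (i + (j : ZMod n)) = 0)).card := by
    intro i
    rw [Finset.card_filter]
    rfl
  -- A : f i = 0 → z i ≤ m + 1
  have A : ∀ i : ZMod n, f i = 0 → z i ≤ m + 1 := by
    intro i h0
    have h1 : z i = g i + ∑ j ∈ Finset.Icc 1 k, g (i + (j : ZMod n)) := zz_split n k f i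
    rw [cnt0 i] at h1
    have h2 : ((Finset.Icc 1 k).filter (fun j : ℕ => f (i + (j : ZMod n)) = 0)).card ≤ m := by
      have := hf i
      rw [h0] at this
      exact this
    have h3 : g i ≤ 1 := gg_le_one n f i
    omega
  -- B : f i = 1 → m + 1 ≤ z i
  have B : ∀ i : ZMod n, f i = 1 → m + 1 ≤ z i := by
    intro i h1
    have hsplit := Finset.card_filter_add_card_filter_not
      (s := Finset.Icc 1 k) (p := fun j : ℕ => f (i + (j : ZMod n)) = 0)
    have heq : (Finset.Icc 1 k).filter (fun j : ℕ => ¬ f (i + (j : ZMod n)) = 0)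
        = (Finset.Icc 1 k).filter (fun j : ℕ => f (i + (j : ZMod n)) = f i) := by
      apply Finset.filter_congr
      intro j _
      rw [h1, fin2]
    rw [heq] at hsplit
    have hcard : (Finset.Icc 1 k).card = k := by
      rw [Nat.card_Icc]; omega
    have h2 := hf i
    have h3 : z i = g i + ∑ j ∈ Finset.Icc 1 k, g (i + (j : ZMod n)) := zz_split n k f i
    rw [cnt0 i] at h3
    omega
  -- C : recurrence
  have C : ∀ i : ZMod n, z i + g (i + ((k+1 : ℕ) : ZMod n)) = g i + z (i + 1) := by
    intro i
    have e1 : ∑ t ∈ Finset.range (k+2), g (i + (t : ZMod n))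
        = z i + g (i + ((k+1 : ℕ) : ZMod n)) := by
      rw [hzdef, zz]
      exact Finset.sum_range_succ _ _
    have e2 : ∑ t ∈ Finset.range (k+2), g (i + (t : ZMod n))
        = (∑ t ∈ Finset.range (k+1), g (i + ((t+1 : ℕ) : ZMod n))) + g (i + ((0:ℕ) : ZMod n)) := by
      exact Finset.sum_range_succ' _ _
    have e3 : ∑ t ∈ Finset.range (k+1), g (i + ((t+1 : ℕ) : ZMod n)) = z (i + 1) := by
      rw [hzdef, zz]
      apply Finset.sum_congr rfl
      intro t _
      congr 1
      push_cast
      ring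
    rw [e3] at e2
    have e4 : g (i + ((0:ℕ) : ZMod n)) = g i := by norm_num
    rw [e4] at e2
    omega
  -- z is constant equal to m+1
  have hub : ∀ j : ZMod n, z j ≤ m + 1 := by
    by_contra hcon
    push_neg at hcon
    obtain ⟨j0, hj0⟩ := hcon
    obtain ⟨i0, -, hmax⟩ := Finset.exists_max_image (Finset.univ : Finset (ZMod n)) z
      ⟨0, Finset.mem_univ 0⟩
    have hZ : m + 2 ≤ z i0 := by
      have := hmax j0 (Finset.mem_univ j0)
      omega
    have key : ∀ i : ZMod n, z i = z i0 → z (i + 1) = z i0 := by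
      intro i hi
      have hfi : f i = 1 := by
        rcases (by decide : ∀ v : Fin 2, v = 0 ∨ v = 1) (f i) with h | h
        · exact absurd (A i h) (by omega)
        · exact h
      have hgi : g i = 0 := by
        rw [hgdef]; unfold gg
        simp [hfi]
      have hc := C i
      have hle := hmax (i + 1) (Finset.mem_univ (i + 1))
      omega
    have all : ∀ t : ℕ, z (i0 + (t : ZMod n)) = z i0 := by
      intro t
      induction t with
      | zero => simp
      | succ t ih =>
        have := key _ ih
        have harg : i0 + ((t + 1 : ℕ) : ZMod n) = i0 + (t : ZMod n) + 1 := by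
          push_cast; ring
        rw [harg]
        exact this
    have allz : ∀ j : ZMod n, z j = z i0 := by
      intro j
      have hval : (((j - i0).val : ℕ) : ZMod n) = j - i0 := ZMod.natCast_rightInverse _
      have := all (j - i0).val
      rw [hval] at this
      have harg : i0 + (j - i0) = j := by ring
      rwa [harg] at this
    have allf : ∀ j : ZMod n, f j = 1 := by
      intro j
      rcases (by decide : ∀ v : Fin 2, v = 0 ∨ v = 1) (f j) with h | h
      · have := A j h
        have := allz j
        omega
      · exact h
    have hz0 : z i0 = 0 := by
      rw [hzdef, zz]
      apply Finset.sum_eq_zero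
      intro t _
      unfold gg
      simp [allf]
    omega
  have hlb : ∀ j : ZMod n, m + 1 ≤ z j := by
    by_contra hcon
    push_neg at hcon
    obtain ⟨j0, hj0⟩ := hcon
    obtain ⟨i0, -, hmin⟩ := Finset.exists_min_image (Finset.univ : Finset (ZMod n)) z
      ⟨0, Finset.mem_univ 0⟩
    have hZ : z i0 ≤ m := by
      have := hmin j0 (Finset.mem_univ j0)
      omega
    have key : ∀ i : ZMod n, z i = z i0 → z (i + 1) = z i0 := by
      intro i hi
      have hfi : f i = 0 := by
        rcases (by decide : ∀ v : Fin 2, v = 0 ∨ v = 1) (f i) with h | h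
        · exact h
        · exact absurd (B i h) (by omega)
      have hgi : g i = 1 := by
        rw [hgdef]; unfold gg
        simp [hfi]
      have hc := C i
      have hle := hmin (i + 1) (Finset.mem_univ (i + 1))
      have hgle := gg_le_one n f (i + ((k+1 : ℕ) : ZMod n))
      rw [← hgdef] at hgle
      omega
    have all : ∀ t : ℕ, z (i0 + (t : ZMod n)) = z i0 := by
      intro t
      induction t with
      | zero => simp
      | succ t ih =>
        have := key _ ih
        have harg : i0 + ((t + 1 : ℕ) : ZMod n) = i0 + (t : ZMod n) + 1 := by
          push_cast; ring
        rw [harg]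
        exact this
    have allz : ∀ j : ZMod n, z j = z i0 := by
      intro j
      have hval : (((j - i0).val : ℕ) : ZMod n) = j - i0 := ZMod.natCast_rightInverse _
      have := all (j - i0).val
      rw [hval] at this
      have harg : i0 + (j - i0) = j := by ring
      rwa [harg] at this
    have allf : ∀ j : ZMod n, f j = 0 := by
      intro j
      rcases (by decide : ∀ v : Fin 2, v = 0 ∨ v = 1) (f j) with h | h
      · exact h
      · have := B j h
        have := allz j
        omega
    have hzfull : z i0 = k + 1 := by
      rw [hzdef, zz]
      calc ∑ t ∈ Finset.range (k+1), gg n f (i0 + (t : ZMod n))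
          = ∑ t ∈ Finset.range (k+1), 1 := by
            apply Finset.sum_congr rfl
            intro t _
            unfold gg
            simp [allf]
        _ = k + 1 := by simp
    omega
  have hz : ∀ j : ZMod n, z j = m + 1 := fun j => le_antisymm (hub j) (hlb j)
  -- sum identity
  have hsum1 : ∑ i : ZMod n, z i = n * (m + 1) := by
    rw [Finset.sum_congr rfl (fun i _ => hz i)]
    simp [Finset.card_univ, ZMod.card]
  have hsum2 : ∑ i : ZMod n, z i = (k + 1) * ∑ i : ZMod n, g i := by
    calc ∑ i : ZMod n, z i
        = ∑ i : ZMod n, ∑ t ∈ Finset.range (k+1), g (i + (t : ZMod n)) := rfl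
      _ = ∑ t ∈ Finset.range (k+1), ∑ i : ZMod n, g (i + (t : ZMod n)) := Finset.sum_comm
      _ = ∑ t ∈ Finset.range (k+1), ∑ i : ZMod n, g i := by
          apply Finset.sum_congr rfl
          intro t _
          exact Fintype.sum_equiv (Equiv.addRight ((t : ℕ) : ZMod n)) _ _ (fun i => rfl)
      _ = (k + 1) * ∑ i : ZMod n, g i := by
          rw [Finset.sum_const, Finset.card_range, smul_eq_mul]
  set S := ∑ i : ZMod n, g i
  have hkey : n * (m + 1) = (2 * S) * (m + 1) := by
    rw [hsum1] at hsum2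
    rw [hsum2, hk]
    ring
  have hn2 : n = 2 * S := Nat.eq_of_mul_eq_mul_right (by omega) hkey
  obtain ⟨c, hc⟩ := hnodd
  omega

/-- For odd k ≥ 1 and prime n > k+1, the k-th power of the directed n-cycle has no
2-colouring in which every vertex has at most (k-1)/2 out-neighbours of its own colour. -/
theorem cycle_power_no_majority_two_colouring
    (k n : ℕ) (hk : 1 ≤ k) (hkodd : Odd k) (hn : n.Prime) (hnk : k + 1 < n) :
    ¬ ∃ f : ZMod n → Fin 2, ∀ i : ZMod n,
        ((Finset.Icc 1 k).filter (fun j : ℕ => f (i + (j : ZMod n)) = f i)).card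
          ≤ (k - 1) / 2 := by
  rintro ⟨f, hf⟩
  haveI : NeZero n := ⟨hn.pos.ne'⟩
  obtain ⟨m, hm⟩ := hkodd
  have hmk : k = 2 * m + 1 := by omega
  have hnodd : Odd n := hn.odd_of_ne_two (by omega)
  exact aux n k m hnodd hmk f (fun i => by
    have := hf i
    have hdiv : (k - 1) / 2 = m := by omega
    omega)
end

section
/- For every undirected finite graph G and every integer k ≥ 1, there is a vertex k-colouring of G such that every vertex v has at most deg(v)/k neighbours receiving the same colour as v. -/
/-!
Among all colourings `f : V → α`, take one with the fewest monochromatic edges. If some vertex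
`v` had more than `deg v / |α|` neighbours of its own colour, then by pigeonhole some colour `c`
occurs on fewer of its neighbours, and recolouring `v` with `c` changes only the edges at `v`,
strictly decreasing the number of monochromatic edges.
-/

open Finset

namespace SimpleGraph

variable {V α : Type*} (G : SimpleGraph V)

@[simps]
def monochromatic (f : V → α) : SimpleGraph V where
  Adj u w := G.Adj u w ∧ f u = f w
  symm.symm _ _ h := ⟨h.1.symm, h.2.symm⟩
  loopless.irrefl v h := G.loopless.irrefl v h.1

variable {G}

instance [DecidableRel G.Adj] [DecidableEq α] (f : V → α) :
    DecidableRel (G.monochromatic f).Adj :=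
  fun u w => inferInstanceAs (Decidable (G.Adj u w ∧ f u = f w))

lemma deleteIncidenceSet_monochromatic_update [DecidableEq V] (f : V → α) (v : V) (c : α) :
    (G.monochromatic (Function.update f v c)).deleteIncidenceSet v =
      (G.monochromatic f).deleteIncidenceSet v := by
  ext u w
  simp +contextual [deleteIncidenceSet_adj, Function.update_of_ne]

variable [Fintype V] [DecidableRel G.Adj] [DecidableEq α]

lemma degree_monochromatic (f : V → α) (v : V) :
    (G.monochromatic f).degree v = #{w ∈ G.neighborFinset v | f w = f v} := by
  rw [← card_neighborFinset_eq_degree]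
  congr 1
  ext w
  simp [eq_comm]

lemma card_edgeFinset_eq_add_degree [DecidableEq V] (H : SimpleGraph V) [DecidableRel H.Adj]
    (v : V) : #H.edgeFinset = #(H.deleteIncidenceSet v).edgeFinset + H.degree v := by
  rw [card_edgeFinset_deleteIncidenceSet, Nat.sub_add_cancel (H.degree_le_card_edgeFinset v)]

lemma card_edgeFinset_monochromatic_update_add [DecidableEq V] (f : V → α) (v : V) (c : α) :
    #(G.monochromatic (Function.update f v c)).edgeFinset + #{w ∈ G.neighborFinset v | f w = f v} =
      #(G.monochromatic f).edgeFinset + #{w ∈ G.neighborFinset v | f w = c} := by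
  have hdeg : (G.monochromatic (Function.update f v c)).degree v =
      #{w ∈ G.neighborFinset v | f w = c} := by
    rw [degree_monochromatic, Function.update_self]
    congr 1
    refine filter_congr fun w hw => ?_
    rw [Function.update_of_ne (G.ne_of_adj ((G.mem_neighborFinset v w).1 hw)).symm]
  have hrest : #((G.monochromatic (Function.update f v c)).deleteIncidenceSet v).edgeFinset =
      #((G.monochromatic f).deleteIncidenceSet v).edgeFinset := by
    congr 1
    apply coe_injective
    simp only [coe_edgeFinset, deleteIncidenceSet_monochromatic_update]
  rw [card_edgeFinset_eq_add_degree _ v, card_edgeFinset_eq_add_degree (G.monochromatic f) v,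
    ← degree_monochromatic, hdeg, hrest]
  ac_rfl

lemma exists_card_mul_degree_monochromatic_le [Fintype α] [Nonempty α] :
    ∃ f : V → α, ∀ v, Fintype.card α * (G.monochromatic f).degree v ≤ G.degree v := by
  classical
  obtain ⟨f, hf⟩ := Finite.exists_min fun f : V → α => #(G.monochromatic f).edgeFinset
  refine ⟨f, fun v => ?_⟩
  by_contra! hv
  rw [degree_monochromatic, ← card_neighborFinset_eq_degree, ← card_univ] at hv
  obtain ⟨c, -, hc⟩ := exists_card_fiber_lt_of_card_lt_mul (f := f) hv
  have := G.card_edgeFinset_monochromatic_update_add f v c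
  have := hf (Function.update f v c)
  omega

end SimpleGraph

theorem lovasz_defective_colouring_general
    {V : Type*} [Fintype V]
    (G : SimpleGraph V) [DecidableRel G.Adj] (k : ℕ) (hk : 1 ≤ k) :
    ∃ f : V → Fin k, ∀ v : V,
      k * ((G.neighborFinset v).filter (fun w => f w = f v)).card ≤ G.degree v := by
  have : Nonempty (Fin k) := ⟨⟨0, hk⟩⟩
  obtain ⟨f, hf⟩ := G.exists_card_mul_degree_monochromatic_le (α := Fin k)
  exact ⟨f, fun v => by simpa only [SimpleGraph.degree_monochromatic, Fintype.card_fin] using hf v⟩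

/-- Lovász: for every finite graph G and k ≥ 1 there is a k-colouring such that
every vertex v has at most deg(v)/k neighbours of its own colour. -/
theorem lovasz_defective_colouring
    {V : Type*} [Fintype V] [DecidableEq V]
    (G : SimpleGraph V) [DecidableRel G.Adj] (k : ℕ) (hk : 1 ≤ k) :
    ∃ f : V → Fin k, ∀ v : V,
      k * ((G.neighborFinset v).filter (fun w => f w = f v)).card ≤ G.degree v :=
  lovasz_defective_colouring_general G k hk
end

section
/- Every finite digraph with n vertices and minimum out-degree δ > 72·log(3n) has a 3-colouring such that every vertex has at most half of its out-neighbours with its own colour (a majority 3-colouring). -/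
open Finset

/-- key numeric fact: 72 * (log 3 - 3/2 * log 2) ≥ 1 -/
lemma maj3_numeric : (1:ℝ) ≤ 72 * (Real.log 3 - 3/2 * Real.log 2) := by
  have h1 : Real.exp 1 * 2 ^ (108:ℕ) ≤ 3 ^ (72:ℕ) := by
    have he : Real.exp 1 < 2.7182818286 := Real.exp_one_lt_d9
    nlinarith [he]
  have h2 : (1:ℝ) ≤ Real.log ((3:ℝ) ^ (72:ℕ) / 2 ^ (108:ℕ)) := by
    rw [show (1:ℝ) = Real.log (Real.exp 1) by rw [Real.log_exp]]
    apply Real.log_le_log (Real.exp_pos 1)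
    rw [le_div_iff₀ (by positivity)]
    linarith [h1]
  rw [Real.log_div (by positivity) (by positivity), Real.log_pow, Real.log_pow] at h2
  push_cast at h2
  linarith

/-- weighted counting identity -/
lemma maj3_sum_weight {V : Type*} [Fintype V] [DecidableEq V]
    (v : V) (S : Finset V) (hv : v ∉ S) (c : Fin 3) :
    ∑ f : V → Fin 3, ((if f v = c then 1 else 0) * ∏ w ∈ S, (if f w = c then 2 else 1) : ℕ)
      = 4 ^ S.card * 3 ^ (Fintype.card V - 1 - S.card) := by
  classical
  set φ : V → Fin 3 → ℕ := fun w x =>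
    if w = v then (if x = c then 1 else 0) else (if w ∈ S then (if x = c then 2 else 1) else 1)
    with hφ
  have hterm : ∀ f : V → Fin 3,
      ((if f v = c then 1 else 0) * ∏ w ∈ S, (if f w = c then 2 else 1) : ℕ)
        = ∏ w : V, φ w (f w) := by
    intro f
    have hsplit : ∏ w : V, φ w (f w)
        = φ v (f v) * ∏ w ∈ (univ.erase v), φ w (f w) := by
      rw [mul_comm, Finset.prod_erase_mul _ _ (mem_univ v)]
    rw [hsplit]
    have h1 : φ v (f v) = (if f v = c then 1 else 0) := by simp [hφ]
    have hsub : S ⊆ univ.erase v := by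
      intro w hw
      exact Finset.mem_erase.mpr ⟨fun h => hv (h ▸ hw), mem_univ w⟩
    have h2 : ∏ w ∈ (univ.erase v), φ w (f w) = ∏ w ∈ S, φ w (f w) := by
      refine (Finset.prod_subset hsub ?_).symm
      intro w hw hws
      have hwv : w ≠ v := (Finset.mem_erase.mp hw).1
      simp [hφ, hwv, hws]
    have h3 : ∏ w ∈ S, φ w (f w) = ∏ w ∈ S, (if f w = c then 2 else 1) := by
      apply Finset.prod_congr rfl
      intro w hw
      have hwv : w ≠ v := fun h => hv (h ▸ hw)
      simp [hφ, hwv, hw]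
    rw [h1, h2, h3]
  calc ∑ f : V → Fin 3, ((if f v = c then 1 else 0) * ∏ w ∈ S, (if f w = c then 2 else 1) : ℕ)
      = ∑ f : V → Fin 3, ∏ w : V, φ w (f w) := by
        exact Finset.sum_congr rfl fun f _ => hterm f
    _ = ∏ w : V, ∑ x : Fin 3, φ w x := (Fintype.prod_sum φ).symm
    _ = 4 ^ S.card * 3 ^ (Fintype.card V - 1 - S.card) := by
        have hval : ∀ w : V, ∑ x : Fin 3, φ w x
            = if w = v then 1 else (if w ∈ S then 4 else 3) := by
          intro w
          by_cases hw : w = v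
          · subst hw
            simp only [hφ, if_pos rfl]
            fin_cases c <;> simp [Fin.sum_univ_three]
          · by_cases hws : w ∈ S
            · simp only [hφ, if_neg hw, if_pos hws]
              fin_cases c <;> simp [Fin.sum_univ_three]
            · simp [hφ, hw, hws]
        rw [Finset.prod_congr rfl fun w _ => hval w]
        rw [← Finset.prod_erase_mul _ _ (mem_univ v)]
        simp only [if_pos rfl, mul_one]
        have : ∏ w ∈ univ.erase v, (if w = v then 1 else (if w ∈ S then 4 else 3))
            = ∏ w ∈ univ.erase v, (if w ∈ S then 4 else 3) := by
          apply Finset.prod_congr rfl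
          intro w hw
          simp [(Finset.mem_erase.mp hw).1]
        rw [this]
        have hf1 : (univ.erase v).filter (fun w => w ∈ S) = S := by
          ext w
          simp only [Finset.mem_filter, Finset.mem_erase, mem_univ, true_and, and_true]
          exact ⟨fun h => h.2, fun h => ⟨fun he => hv (he ▸ h), h⟩⟩
        have hcard : (univ.erase v).card = Fintype.card V - 1 := by
          rw [Finset.card_erase_of_mem (mem_univ v), Finset.card_univ]
        have hf2 : ((univ.erase v).filter (fun w => ¬ w ∈ S)).card
            = Fintype.card V - 1 - S.card := by
          have := Finset.card_filter_add_card_filter_not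
            (s := univ.erase v) (p := fun w => w ∈ S)
          rw [hf1] at this
          omega
        rw [Finset.prod_ite (fun _ => (4:ℕ)) (fun _ => (3:ℕ)), Finset.prod_const,
          Finset.prod_const, hf1, hf2]
        simp

/-- per-vertex bad colouring count bound -/
lemma maj3_bad_count {V : Type*} [Fintype V] [DecidableEq V]
    (v : V) (N : Finset V) :
    (univ.filter (fun f : V → Fin 3 =>
        N.card < 2 * (N.filter (fun w => f w = f v)).card)).card * 2 ^ (N.card / 2)
      ≤ 3 * (4 ^ (N.erase v).card * 3 ^ (Fintype.card V - 1 - (N.erase v).card)) := by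
  classical
  set S := N.erase v with hS
  set W : Fin 3 → (V → Fin 3) → ℕ := fun c f =>
    (if f v = c then 1 else 0) * ∏ w ∈ S, (if f w = c then 2 else 1) with hW
  set B : Finset (V → Fin 3) := univ.filter (fun f : V → Fin 3 =>
        N.card < 2 * (N.filter (fun w => f w = f v)).card) with hB
  have key : ∀ f ∈ B, 2 ^ (N.card / 2) ≤ ∑ c : Fin 3, W c f := by
    intro f hf
    rw [hB, Finset.mem_filter] at hf
    have hbad := hf.2
    have hmS : N.card / 2 ≤ (S.filter (fun w => f w = f v)).card := by
      have hsub : N.filter (fun w => f w = f v)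
          ⊆ insert v (S.filter (fun w => f w = f v)) := by
        intro w hw
        rw [Finset.mem_filter] at hw
        by_cases hwv : w = v
        · rw [hwv]; exact Finset.mem_insert_self v _
        · exact Finset.mem_insert_of_mem
            (Finset.mem_filter.mpr ⟨Finset.mem_erase.mpr ⟨hwv, hw.1⟩, hw.2⟩)
      have h1 := Finset.card_le_card hsub
      have h2 := Finset.card_insert_le v (S.filter (fun w => f w = f v))
      omega
    have hWfv : W (f v) f = 2 ^ (S.filter (fun w => f w = f v)).card := by
      rw [hW]
      simp only [if_pos rfl, one_mul]
      rw [← Finset.prod_filter_mul_prod_filter_not S (fun w => f w = f v)]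
      rw [Finset.prod_congr rfl (fun w hw => if_pos (Finset.mem_filter.mp hw).2),
          Finset.prod_congr rfl (fun w hw => if_neg (Finset.mem_filter.mp hw).2),
          Finset.prod_const, Finset.prod_const, one_pow, mul_one]
      simp
    calc 2 ^ (N.card / 2) ≤ 2 ^ (S.filter (fun w => f w = f v)).card :=
          Nat.pow_le_pow_right (by norm_num) hmS
      _ = W (f v) f := hWfv.symm
      _ ≤ ∑ c : Fin 3, W c f :=
          Finset.single_le_sum (f := fun c => W c f) (fun c _ => Nat.zero_le _)
            (mem_univ (f v))
  calc B.card * 2 ^ (N.card / 2)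
      = ∑ _f ∈ B, 2 ^ (N.card / 2) := by rw [Finset.sum_const, smul_eq_mul, mul_comm]
    _ ≤ ∑ f ∈ B, ∑ c : Fin 3, W c f := Finset.sum_le_sum key
    _ ≤ ∑ f : V → Fin 3, ∑ c : Fin 3, W c f :=
        Finset.sum_le_sum_of_subset (hB ▸ Finset.filter_subset _ _)
    _ = ∑ c : Fin 3, ∑ f : V → Fin 3, W c f := Finset.sum_comm
    _ = 3 * (4 ^ S.card * 3 ^ (Fintype.card V - 1 - S.card)) := by
        rw [Finset.sum_congr rfl
          (fun c _ => maj3_sum_weight v S (hS ▸ Finset.notMem_erase v N) c)]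
        rw [Finset.sum_const, smul_eq_mul]
        norm_num

/-- analytic inequality -/
lemma maj3_analytic (n d d' t : ℕ) (hn : 1 ≤ n) (hd' : d' ≤ d) (ht : d ≤ 2 * t + 1)
    (hdeg : 72 * Real.log (3 * (n:ℝ)) < (d:ℝ)) :
    (n : ℝ) * 4 ^ d' < 2 ^ t * 3 ^ d' := by
  have hnR : (1:ℝ) ≤ (n:ℝ) := by exact_mod_cast hn
  have hc : (1:ℝ) ≤ 72 * (Real.log 3 - 3/2 * Real.log 2) := maj3_numeric
  have hc_pos : 0 < Real.log 3 - 3/2 * Real.log 2 := by linarith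
  have hlogn : Real.log (3 * (n:ℝ)) = Real.log 3 + Real.log n :=
    Real.log_mul (by norm_num) (by positivity)
  have hlogn0 : 0 ≤ Real.log (n:ℝ) := Real.log_nonneg hnR
  have hlog2 : 0 < Real.log 2 := Real.log_pos (by norm_num)
  have hlog23 : Real.log 2 ≤ Real.log 3 := Real.log_le_log (by norm_num) (by norm_num)
  have hL0 : 0 ≤ Real.log (3 * (n:ℝ)) := by rw [hlogn]; positivity
  -- d * c > L
  have hA : Real.log (3 * (n:ℝ)) < (d:ℝ) * (Real.log 3 - 3/2 * Real.log 2) := by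
    have h1 : Real.log (3 * (n:ℝ)) * 1 ≤
        Real.log (3 * (n:ℝ)) * (72 * (Real.log 3 - 3/2 * Real.log 2)) :=
      mul_le_mul_of_nonneg_left hc hL0
    have h2 : (72 * Real.log (3 * (n:ℝ))) * (Real.log 3 - 3/2 * Real.log 2)
        < (d:ℝ) * (Real.log 3 - 3/2 * Real.log 2) :=
      mul_lt_mul_of_pos_right hdeg hc_pos
    nlinarith
  -- log form
  have hlog : Real.log ((n:ℝ) * 4 ^ d') < Real.log ((2:ℝ) ^ t * 3 ^ d') := by
    rw [Real.log_mul (by positivity) (by positivity),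
        Real.log_mul (by positivity) (by positivity),
        Real.log_pow, Real.log_pow]
    simp only [Real.log_pow]
    have hlog4 : Real.log 4 = 2 * Real.log 2 := by
      rw [show (4:ℝ) = 2^2 by norm_num, Real.log_pow]; push_cast; ring
    rw [hlog4]
    have hd'R : (d':ℝ) ≤ (d:ℝ) := by exact_mod_cast hd'
    have htR : (d:ℝ) ≤ 2 * (t:ℝ) + 1 := by exact_mod_cast ht
    have hB : ((d:ℝ) - 1)/2 * Real.log 2 ≤ (t:ℝ) * Real.log 2 :=
      mul_le_mul_of_nonneg_right (by linarith) (le_of_lt hlog2)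
    have hC : (d:ℝ) * (Real.log 3 - 2 * Real.log 2)
        ≤ (d':ℝ) * (Real.log 3 - 2 * Real.log 2) := by
      apply mul_le_mul_of_nonpos_right hd'R
      have hlog34 : Real.log 3 ≤ Real.log 4 := Real.log_le_log (by norm_num) (by norm_num)
      linarith [hlog4 ▸ hlog34]
    rw [hlogn] at hA
    linarith
  have := (Real.log_lt_log_iff (by positivity) (by positivity)).mp hlog
  exact this

/-- Every digraph with n vertices and minimum out-degree δ > 72 log(3n) has a
majority 3-colouring. -/
theorem majority_three_colouring_of_log_outdegree
    {V : Type*} [Fintype V] [DecidableEq V]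
    (A : V → V → Prop) [DecidableRel A]
    (hdeg : ∀ v : V,
      72 * Real.log (3 * Fintype.card V)
        < ((Finset.univ.filter (fun w => A v w)).card : ℝ)) :
    ∃ f : V → Fin 3, ∀ v : V,
      2 * ((Finset.univ.filter (fun w => A v w ∧ f w = f v)).card)
        ≤ (Finset.univ.filter (fun w => A v w)).card := by
  classical
  by_cases hV : IsEmpty V
  · exact ⟨fun _ => 0, fun v => (hV.false v).elim⟩
  rw [not_isEmpty_iff] at hV
  have hn : 1 ≤ Fintype.card V := Fintype.card_pos
  set n := Fintype.card V with hn_def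
  set N : V → Finset V := fun v => univ.filter (fun w => A v w) with hN
  set Bad : V → Finset (V → Fin 3) := fun v => univ.filter (fun f : V → Fin 3 =>
        (N v).card < 2 * ((N v).filter (fun w => f w = f v)).card) with hBad
  -- per vertex real bound
  have hper : ∀ v : V, ((Bad v).card : ℝ) * n < 3 ^ n := by
    intro v
    set d := (N v).card with hd
    set d' := ((N v).erase v).card with hd'
    have hd'd : d' ≤ d := by
      rw [hd, hd']; exact Finset.card_le_card (Finset.erase_subset v (N v))
    have hd'n : d' ≤ n - 1 := by
      have : (N v).erase v ⊆ univ.erase v := Finset.erase_subset_erase v (subset_univ _)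
      have h1 := Finset.card_le_card this
      have h2 : (univ.erase v).card = n - 1 := by
        rw [Finset.card_erase_of_mem (mem_univ v), Finset.card_univ]
      omega
    have hanal := maj3_analytic n d d' (d / 2) hn hd'd (by omega) (hdeg v)
    -- cast count bound to ℝ
    have hcountR : ((Bad v).card : ℝ) * 2 ^ (d / 2)
        ≤ 3 * (4 ^ d' * 3 ^ (n - 1 - d')) := by
      simp only [hBad, hd, hd']
      exact_mod_cast maj3_bad_count v (N v)
    have h2t : (0:ℝ) < 2 ^ (d / 2) := by positivity
    have hpow : (3:ℝ) ^ (n - 1 - d') * 3 ^ d' = 3 ^ (n - 1) := by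
      rw [← pow_add]; congr 1; omega
    have hpow2 : (3:ℝ) * 3 ^ (n - 1) = 3 ^ n := by
      rw [← pow_succ']; congr 1; omega
    have key : ((Bad v).card : ℝ) * n * 2 ^ (d / 2) < 3 ^ n * 2 ^ (d / 2) := by
      calc ((Bad v).card : ℝ) * n * 2 ^ (d / 2)
          = (((Bad v).card : ℝ) * 2 ^ (d / 2)) * n := by ring
        _ ≤ (3 * (4 ^ d' * 3 ^ (n - 1 - d'))) * n :=
            mul_le_mul_of_nonneg_right hcountR (by positivity)
        _ = (3 * 3 ^ (n - 1 - d')) * ((n:ℝ) * 4 ^ d') := by ring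
        _ < (3 * 3 ^ (n - 1 - d')) * (2 ^ (d / 2) * 3 ^ d') :=
            mul_lt_mul_of_pos_left hanal (by positivity)
        _ = (3 * (3 ^ (n - 1 - d') * 3 ^ d')) * 2 ^ (d / 2) := by ring
        _ = 3 ^ n * 2 ^ (d / 2) := by rw [hpow, hpow2]
    exact lt_of_mul_lt_mul_right key (le_of_lt h2t)
  -- union bound
  set B : Finset (V → Fin 3) := univ.biUnion Bad with hBdef
  have hsum : (B.card : ℝ) < 3 ^ n := by
    have h1 : B.card ≤ ∑ v : V, (Bad v).card := Finset.card_biUnion_le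
    have h2 : (∑ v : V, ((Bad v).card : ℝ)) * n < (3:ℝ) ^ n * n := by
      rw [Finset.sum_mul]
      have := Finset.sum_lt_sum_of_nonempty (s := (univ : Finset V))
        (f := fun v => ((Bad v).card : ℝ) * n) (g := fun _ => (3:ℝ) ^ n)
        Finset.univ_nonempty (fun v _ => hper v)
      rw [Finset.sum_const, Finset.card_univ, nsmul_eq_mul] at this
      calc ∑ v : V, ((Bad v).card : ℝ) * n < (n:ℝ) * 3 ^ n := this
        _ = (3:ℝ) ^ n * n := by ring
    have hnpos : (0:ℝ) < n := by exact_mod_cast hn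
    have h3 : (∑ v : V, ((Bad v).card : ℝ)) < (3:ℝ) ^ n :=
      lt_of_mul_lt_mul_right h2 (le_of_lt hnpos)
    calc (B.card : ℝ) ≤ ∑ v : V, ((Bad v).card : ℝ) := by exact_mod_cast h1
      _ < 3 ^ n := h3
  have hcard : B.card < Fintype.card (V → Fin 3) := by
    have : Fintype.card (V → Fin 3) = 3 ^ n := by
      rw [Fintype.card_fun, Fintype.card_fin]
    rw [this]
    exact_mod_cast hsum
  have hne : B ≠ univ := by
    intro h
    rw [h, Finset.card_univ] at hcard
    exact lt_irrefl _ hcard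
  obtain ⟨f, hf⟩ : ∃ f, f ∉ B := by
    by_contra h
    push_neg at h
    exact hne (Finset.eq_univ_iff_forall.mpr h)
  refine ⟨f, fun v => ?_⟩
  rw [hBdef, Finset.mem_biUnion] at hf
  push_neg at hf
  have hfv := hf v (mem_univ v)
  rw [hBad] at hfv
  simp only [Finset.mem_filter, mem_univ, true_and, not_lt] at hfv
  have hfilter : (univ.filter (fun w => A v w ∧ f w = f v))
      = (N v).filter (fun w => f w = f v) := by
    rw [hN, Finset.filter_filter]
  rw [hfilter]
  exact hfv
end

section
/- Let k ≥ 2 and n ≥ 2k+3 with n not divisible by k+1. Let G be the digraph on ZMod n with arcs i → i+j for 1 ≤ j ≤ k. Then in every (k+1)-colouring of G, some vertex has at least one out-neighbour of its own colour; i.e., no proper colouring of the underlying undirected graph with k+1 colours exists. -/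
/-- For k ≥ 2 and n ≥ 2k+3 with (k+1) ∤ n, in every (k+1)-colouring of the k-th
power of the directed n-cycle some vertex has an out-neighbour of its own colour. -/
theorem cycle_power_no_proper_colouring
    (k n : ℕ) (hk : 2 ≤ k) (hn : 2 * k + 3 ≤ n) (hdvd : ¬ (k + 1) ∣ n)
    (f : ZMod n → Fin (k + 1)) :
    ∃ (i : ZMod n) (j : ℕ), 1 ≤ j ∧ j ≤ k ∧ f (i + (j : ZMod n)) = f i := by
  haveI : NeZero n := ⟨by omega⟩
  by_contra hcon
  push_neg at hcon
  -- hcon : ∀ i j, 1 ≤ j → j ≤ k → f (i + j) ≠ f i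
  -- Step 1: f is periodic with period k+1.
  have key : ∀ i : ZMod n, f (i + ((k + 1 : ℕ) : ZMod n)) = f i := by
    intro i
    have step : ∀ (a b : Fin (k + 2)), a.val < b.val →
        f (i + ((a : ℕ) : ZMod n)) = f (i + ((b : ℕ) : ZMod n)) →
        f (i + ((k + 1 : ℕ) : ZMod n)) = f i := by
      intro a b hab heq
      set j := b.val - a.val with hj
      have hj1 : 1 ≤ j := by omega
      have hjk1 : j ≤ k + 1 := by have := b.isLt; omega
      have hb : ((b : ℕ) : ZMod n) = ((a : ℕ) : ZMod n) + (j : ZMod n) := by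
        push_cast [hj]
        have : (b.val : ZMod n) = (a.val : ZMod n) + ((b.val - a.val : ℕ) : ZMod n) := by
          rw [← Nat.cast_add]
          congr 1
          omega
        push_cast at this
        linear_combination this
      have heq' : f ((i + ((a : ℕ) : ZMod n)) + (j : ZMod n)) = f (i + ((a : ℕ) : ZMod n)) := by
        rw [add_assoc, ← hb]
        exact heq.symm
      by_cases hjk : j ≤ k
      · exact absurd heq' (hcon _ j hj1 hjk)
      · have hjeq : j = k + 1 := by omega
        have ha0 : a.val = 0 := by have := b.isLt; omega
        have hbk : b.val = k + 1 := by omega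
        rw [ha0] at heq
        rw [hbk] at heq
        simpa using heq.symm
    have hcard : Fintype.card (Fin (k + 1)) < Fintype.card (Fin (k + 2)) := by simp
    obtain ⟨a, b, hab, heq⟩ :=
      Fintype.exists_ne_map_eq_of_card_lt (fun j : Fin (k + 2) => f (i + ((j : ℕ) : ZMod n))) hcard
    rcases lt_or_gt_of_ne (fun hv => hab (Fin.ext hv)) with hlt | hlt
    · exact step a b hlt heq
    · exact step b a hlt heq.symm
  -- Step 2: f is periodic with period (k+1)*m for all m.
  have per : ∀ (m : ℕ) (i : ZMod n), f (i + (((k + 1) * m : ℕ) : ZMod n)) = f i := by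
    intro m
    induction m with
    | zero => intro i; simp
    | succ m ih =>
      intro i
      have : i + (((k + 1) * (m + 1) : ℕ) : ZMod n)
          = (i + ((k + 1 : ℕ) : ZMod n)) + (((k + 1) * m : ℕ) : ZMod n) := by
        push_cast; ring
      rw [this, ih, key]
  -- Step 3: Bézout gives periodicity with period d = gcd(k+1, n) ≤ k.
  set d := Nat.gcd (k + 1) n with hd
  have hd1 : 1 ≤ d := Nat.gcd_pos_of_pos_left n (by omega)
  have hddvd : d ∣ (k + 1) := Nat.gcd_dvd_left _ _
  have hdk : d ≤ k := by
    rcases Nat.lt_or_ge d (k + 1) with h | h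
    · omega
    · have : d = k + 1 := le_antisymm (Nat.le_of_dvd (by omega) hddvd) h
      exact absurd (this ▸ Nat.gcd_dvd_right (k + 1) n) hdvd
  -- In ZMod n, d = (k+1) * gcdA
  have hbez : ((d : ℤ) : ZMod n) = ((k + 1 : ℕ) : ZMod n) * ((Nat.gcdA (k + 1) n : ℤ) : ZMod n) := by
    have := Nat.gcd_eq_gcd_ab (k + 1) n
    have h2 : ((d : ℤ) : ZMod n)
        = (((k + 1 : ℕ) * Nat.gcdA (k + 1) n + (n : ℕ) * Nat.gcdB (k + 1) n : ℤ) : ZMod n) := by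
      rw [hd]; exact_mod_cast congrArg (Int.cast : ℤ → ZMod n) this
    rw [h2]
    push_cast
    simp [ZMod.natCast_self]
  set m : ℕ := (((Nat.gcdA (k + 1) n : ℤ) : ZMod n)).val with hm
  have hmc : (((Nat.gcdA (k + 1) n : ℤ) : ZMod n)) = ((m : ℕ) : ZMod n) := by
    rw [hm, ZMod.natCast_val, ZMod.cast_id]
  have hdz : ((d : ℕ) : ZMod n) = (((k + 1) * m : ℕ) : ZMod n) := by
    push_cast
    push_cast at hbez
    rw [hbez, hmc]
  have hfinal : f ((0 : ZMod n) + ((d : ℕ) : ZMod n)) = f 0 := by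
    rw [hdz]; exact per m 0
  exact hcon 0 d hd1 hdk hfinal
end
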